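/- Let D be a domain in ℝ^n, n ≥ 2, let p > n−1, and let f : D → ℝ̄^n be an open, discrete ring (p,Q)-mapping with Q ∈ L¹_loc(D) and ∞ ∉ f(D). Fix a point x ∈ D and ε > 0 with B(x,2ε) ⊂ D, let E = (B(x,2ε), closure of B(x,ε)), and let Γ_E be the family of all paths γ : [a,b) → B(x,2ε) with γ(a) ∈ closure of B(x,ε) and |γ| ∩ (B(x,2ε)∖F) ≠ ∅ for every compact F ⊂ B(x,2ε). Then M_p(fΓ_E) ≤ ε^{−p} ∫_{B(x,2ε)} Q(y) dm(y). -/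

import Mathlib

open MeasureTheory Metric Set Filter Topology
open scoped ENNReal NNReal Classical

noncomputable section

/-- Euclidean space `ℝⁿ`. -/
abbrev Eucl (n : ℕ) : Type := EuclideanSpace ℝ (Fin n)

/-- Projection from the one-point compactification `ℝ̄ⁿ = ℝⁿ ∪ {∞}` back to `ℝⁿ`,
sending the point `∞` to the junk value `0`. -/
def opProj {X : Type*} [Zero X] (y : OnePoint X) : X := Option.getD y 0

/-- The point of the curve `γ` (defined on the parameter set `s ⊆ ℝ`) lying at
arclength `u` from its beginning: the arclength parametrization of `γ`. -/
def arcParamOn {X : Type*} [PseudoEMetricSpace X] (γ : ℝ → X) (s : Set ℝ) (u : ℝ) : X :=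
  γ (sInf {t | t ∈ s ∧ ENNReal.ofReal u ≤ eVariationOn γ (s ∩ Set.Iic t)})

/-- The line integral `∫_γ ρ ds` of a Borel function `ρ : ℝⁿ → [0,∞]` along a curve
`γ` defined on the parameter set `s ⊆ ℝ`, computed via the arclength parametrization.
By the standard convention, the line integral along a non-rectifiable curve is `∞`. -/
def lineIntegral {X : Type*} [PseudoEMetricSpace X] (ρ : X → ℝ≥0∞) (s : Set ℝ)
    (γ : ℝ → X) : ℝ≥0∞ :=
  if eVariationOn γ s = ∞ then ∞
  else ∫⁻ u in Set.Icc 0 (eVariationOn γ s).toReal, ρ (arcParamOn γ s u)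

/-- Line integral of `ρ : ℝⁿ → [0,∞]` along a curve into `ℝ̄ⁿ`; a curve passing
through `∞` is treated as non-rectifiable, i.e. the integral is `∞`. -/
def lineIntegralOP {n : ℕ} (ρ : Eucl n → ℝ≥0∞) (s : Set ℝ)
    (γ : ℝ → OnePoint (Eucl n)) : ℝ≥0∞ :=
  if ∀ t ∈ s, γ t ≠ OnePoint.infty then lineIntegral ρ s (fun t => opProj (γ t)) else ∞

/-- A curve, recorded as its parameter set (an interval in `ℝ`) together with the map. -/
abbrev Curve (X : Type*) := Set ℝ × (ℝ → X)

/-- A Borel function `ρ : ℝⁿ → [0,∞]` is admissible for a family `Γ` of curves in `ℝ̄ⁿ`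
if `∫_γ ρ ds ≥ 1` for every `γ ∈ Γ`. -/
def IsAdmissible {n : ℕ} (ρ : Eucl n → ℝ≥0∞) (Γ : Set (Curve (OnePoint (Eucl n)))) : Prop :=
  Measurable ρ ∧ ∀ c ∈ Γ, 1 ≤ lineIntegralOP ρ c.1 c.2

/-- The `p`-modulus `M_p(Γ)` of a family of curves in `ℝ̄ⁿ`:
`M_p(Γ) = inf ∫ ρ(x)^p dm(x)` over all admissible `ρ`. -/
def modulus {n : ℕ} (p : ℝ) (Γ : Set (Curve (OnePoint (Eucl n)))) : ℝ≥0∞ :=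
  ⨅ (ρ : Eucl n → ℝ≥0∞) (_ : IsAdmissible ρ Γ), ∫⁻ x, ρ x ^ p

/-- The family `Γ(S₁,S₂,A)` of all curves joining `S₁` and `S₂` in `A`:
`γ : [a,b] → ℝⁿ` with `γ a ∈ S₁`, `γ b ∈ S₂` and `γ t ∈ A` for `a < t < b`. -/
def joinFam {n : ℕ} (S₁ S₂ A : Set (Eucl n)) : Set (Curve (Eucl n)) :=
  {c | ∃ a b : ℝ, a < b ∧ c.1 = Set.Icc a b ∧ ContinuousOn c.2 (Set.Icc a b) ∧
    c.2 a ∈ S₁ ∧ c.2 b ∈ S₂ ∧ ∀ t ∈ Set.Ioo a b, c.2 t ∈ A}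

/-- The image family `fΓ = {f ∘ γ : γ ∈ Γ}`. -/
def imageFam {n : ℕ} (f : Eucl n → OnePoint (Eucl n)) (Γ : Set (Curve (Eucl n))) :
    Set (Curve (OnePoint (Eucl n))) :=
  {c | ∃ g ∈ Γ, c = (g.1, fun t => f (g.2 t))}

/-- The spherical annulus (ring) `A(r₁,r₂,x₀) = {x : r₁ < |x-x₀| < r₂}`. -/
def ann {n : ℕ} (x₀ : Eucl n) (r₁ r₂ : ℝ) : Set (Eucl n) :=
  {x | r₁ < dist x x₀ ∧ dist x x₀ < r₂}

/-- `f : D → ℝ̄ⁿ` is a ring `(p,Q)`-mapping: `f` is continuous on `D` and for every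
`x₀ ∈ D`, all radii `0 < r₁ < r₂ < dist(x₀, ∂D)` and every measurable
`η : (r₁,r₂) → [0,∞]` with `∫_{r₁}^{r₂} η(r) dr ≥ 1`, one has
`M_p(f(Γ(S₁,S₂,A))) ≤ ∫_A Q(x) η(|x-x₀|)^p dm(x)`. -/
def IsRingMapping {n : ℕ} (p : ℝ) (D : Set (Eucl n)) (Q : Eucl n → ℝ≥0∞)
    (f : Eucl n → OnePoint (Eucl n)) : Prop :=
  ContinuousOn f D ∧
  ∀ x₀ ∈ D, ∀ r₁ r₂ : ℝ, 0 < r₁ → r₁ < r₂ →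
    ENNReal.ofReal r₂ < EMetric.infEdist x₀ Dᶜ →
    ∀ η : ℝ → ℝ≥0∞, Measurable η → 1 ≤ ∫⁻ r in Set.Ioo r₁ r₂, η r →
      modulus p (imageFam f
          (joinFam (Metric.sphere x₀ r₁) (Metric.sphere x₀ r₂) (ann x₀ r₁ r₂)))
        ≤ ∫⁻ x in ann x₀ r₁ r₂, Q x * η (dist x x₀) ^ p

/-- `f` is discrete on `D`: every fiber `f⁻¹(y)` consists of isolated points. -/
def DiscreteOn {X Y : Type*} [TopologicalSpace X] (f : X → Y) (D : Set X) : Prop :=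
  ∀ y : Y, ∀ x ∈ D, f x = y → ∃ U ∈ 𝓝 x, ∀ z ∈ U, z ∈ D → f z = y → z = x

/-- `f` is open on `D`: images of open subsets of `D` are open. -/
def OpenOn {X Y : Type*} [TopologicalSpace X] [TopologicalSpace Y]
    (f : X → Y) (D : Set X) : Prop :=
  ∀ U ⊆ D, IsOpen U → IsOpen (f '' U)

/-- `Q ∈ L¹_loc(D)` for `Q : D → [0,∞]`. -/
def LocIntOn {n : ℕ} (Q : Eucl n → ℝ≥0∞) (D : Set (Eucl n)) : Prop :=
  Measurable Q ∧ ∀ K ⊆ D, IsCompact K → ∫⁻ x in K, Q x ≠ ∞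

/-- `h : [a,b] → F` is absolutely continuous: for every `ε > 0` there is `δ > 0` such
that for any finite collection of mutually non-overlapping subintervals
`[uᵢ,vᵢ] ⊆ [a,b]` of total length `< δ` one has `Σ ‖h(vᵢ) - h(uᵢ)‖ < ε`. -/
def AbsContOnInt {F : Type*} [NormedAddCommGroup F] (h : ℝ → F) (a b : ℝ) : Prop :=
  ∀ ε : ℝ, 0 < ε → ∃ δ : ℝ, 0 < δ ∧ ∀ k : ℕ, ∀ u v : Fin k → ℝ,
    (∀ i, a ≤ u i ∧ u i ≤ v i ∧ v i ≤ b) →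
    (Pairwise fun i j => Disjoint (Set.Ioo (u i) (v i)) (Set.Ioo (u j) (v j))) →
    (∑ i, (v i - u i)) < δ → (∑ i, ‖h (v i) - h (u i)‖) < ε

/-- The closed coordinate box with corners `lo`, `hi`. -/
def box {n : ℕ} (lo hi : Eucl n) : Set (Eucl n) :=
  {x : Eucl n | ∀ i, lo i ≤ x i ∧ x i ≤ hi i}

/-- `u` is `ACL` (absolutely continuous on lines) on the open set `A ⊆ ℝⁿ`: for every
closed coordinate box contained in `A` and every coordinate direction `j`,
`u` is absolutely continuous on almost every line segment of the box parallel to the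
`j`-th axis. -/
def ACLOn {n : ℕ} {F : Type*} [NormedAddCommGroup F] (u : Eucl n → F)
    (A : Set (Eucl n)) : Prop :=
  ∀ lo hi : Eucl n, (∀ i, lo i < hi i) → box lo hi ⊆ A →
    ∀ j : Fin n, ∀ᵐ x ∂(volume : Measure (Eucl n)), x ∈ box lo hi →
      AbsContOnInt (fun t => u (WithLp.toLp 2 (Function.update x j t))) (lo j) (hi j)

/-- The `p`-capacity of a condenser `(A, C)`:
`cap_p(A,C) = inf ∫_A |∇u|^p dm` over all nonnegative continuous `ACL` functions
`u` on `A` with `u ≥ 1` on `C`. -/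
def pCapacity {n : ℕ} (p : ℝ) (A C : Set (Eucl n)) : ℝ≥0∞ :=
  ⨅ (u : Eucl n → ℝ) (_ : ContinuousOn u A ∧ (∀ x ∈ A, 0 ≤ u x) ∧
      (∀ x ∈ C, 1 ≤ u x) ∧ ACLOn u A),
    ∫⁻ x in A, ENNReal.ofReal (‖fderiv ℝ u x‖ ^ p)


/-- The family `Γ_E` associated to the condenser `E = (B(x,2ε), closure B(x,ε))`:
all curves `γ : [a,b) → B(x,2ε)` with `γ(a) ∈ closure B(x,ε)` which leave every
compact subset of `B(x,2ε)`. -/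
def gammaE {n : ℕ} (x : Eucl n) (ε : ℝ) : Set (Curve (Eucl n)) :=
  {c | ∃ a b : ℝ, a < b ∧ c.1 = Set.Ico a b ∧ ContinuousOn c.2 (Set.Ico a b) ∧
    c.2 a ∈ Metric.closedBall x ε ∧
    Set.MapsTo c.2 (Set.Ico a b) (Metric.ball x (2 * ε)) ∧
    ∀ F : Set (Eucl n), IsCompact F → F ⊆ Metric.ball x (2 * ε) →
      ¬ (c.2 '' Set.Ico a b ⊆ F)}

/-! For `ε < t < 2ε`, every curve of `Γ_E` starts in `closedBall x ε` and leaves the compact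
set `closedBall x t`, so it contains a subcurve joining the spheres `S(x, ε)` and `S(x, t)` in
the annulus between them; hence `M_p(fΓ_E) ≤ M_p(fΓ(S(x, ε), S(x, t), A))`. Testing the ring
inequality with the constant `η = 1/(t - ε)` bounds the latter by `(t - ε)⁻ᵖ ∫_{B(x,2ε)} Q`, and
`t → 2ε` gives the estimate. -/

theorem csInf_inter_Iic_of_mem {α : Type*} [ConditionallyCompleteLinearOrder α] {S : Set α}
    {b : α} (hS : BddBelow S) (hb : b ∈ S) : sInf (S ∩ Iic b) = sInf S := by
  refine le_antisymm ?_ (csInf_le_csInf hS ⟨b, hb, self_mem_Iic⟩ inter_subset_left)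
  refine le_csInf ⟨b, hb⟩ fun t ht => ?_
  rcases le_or_gt t b with htb | hbt
  · exact csInf_le (hS.mono inter_subset_left) ⟨ht, htb⟩
  · exact (csInf_le (hS.mono inter_subset_left) ⟨hb, self_mem_Iic⟩).trans hbt.le

section Arclength

variable {X : Type*} [PseudoEMetricSpace X] (h : ℝ → X) {s : Set ℝ} {a b : ℝ}

theorem eVariationOn_inter_Iic_eq_add {t : ℝ} (ha : a ∈ s) (hat : a ≤ t) :
    eVariationOn h (s ∩ Iic t) =
      eVariationOn h (s ∩ Iic a) + eVariationOn h (s ∩ Icc a t) := by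
  have hleft : IsGreatest (s ∩ Iic a) a := ⟨⟨ha, self_mem_Iic⟩, fun _ hy => hy.2⟩
  have hright : IsLeast (s ∩ Icc a t) a := ⟨⟨ha, left_mem_Icc.2 hat⟩, fun _ hy => hy.2.1⟩
  rw [← eVariationOn.union h hleft hright, ← inter_union_distrib_left, Iic_union_Icc_eq_Iic hat]

theorem eVariationOn_inter_Iic_eq_add_Icc {t : ℝ} (hs : Icc a b ⊆ s) (ht : t ∈ Icc a b) :
    eVariationOn h (s ∩ Iic t) =
      eVariationOn h (s ∩ Iic a) + eVariationOn h (Icc a b ∩ Iic t) := by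
  have hIcc : Icc a b ∩ Iic t = s ∩ Icc a t := by
    ext y
    simp only [mem_inter_iff, mem_Icc, mem_Iic]
    exact ⟨fun hy => ⟨hs hy.1, hy.1.1, hy.2⟩,
      fun hy => ⟨⟨hy.2.1, hy.2.2.trans ht.2⟩, hy.2.2⟩⟩
  rw [hIcc, eVariationOn_inter_Iic_eq_add h (hs ⟨le_rfl, ht.1.trans ht.2⟩) ht.1]

theorem arcParamOn_Icc_eq (hs : Icc a b ⊆ s) (hab : a ≤ b)
    (hc : eVariationOn h (s ∩ Iic a) ≠ ∞) {u : ℝ} (hu : 0 < u)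
    (huV : ENNReal.ofReal u ≤ eVariationOn h (Icc a b)) :
    arcParamOn h (Icc a b) u = arcParamOn h s (u + (eVariationOn h (s ∩ Iic a)).toReal) := by
  set c := eVariationOn h (s ∩ Iic a)
  set T := {t | t ∈ s ∧ ENNReal.ofReal (u + c.toReal) ≤ eVariationOn h (s ∩ Iic t)}
  have hofReal : ENNReal.ofReal (u + c.toReal) = c + ENNReal.ofReal u := by
    rw [ENNReal.ofReal_add hu.le ENNReal.toReal_nonneg, ENNReal.ofReal_toReal hc, add_comm]
  have hlow : ∀ t ∈ T, a ≤ t := by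
    rintro t ⟨-, ht⟩
    by_contra! hta
    have hle : eVariationOn h (s ∩ Iic t) ≤ c :=
      eVariationOn.mono h (inter_subset_inter_right s (Iic_subset_Iic.2 hta.le))
    rw [hofReal] at ht
    exact (ENNReal.lt_add_right hc (ENNReal.ofReal_pos.2 hu).ne').not_ge (ht.trans hle)
  have hmem :
      ∀ t ∈ Icc a b, t ∈ T ↔ ENNReal.ofReal u ≤ eVariationOn h (Icc a b ∩ Iic t) :=
    fun t ht => by
      rw [← ENNReal.add_le_add_iff_left hc, ← hofReal,
        ← eVariationOn_inter_Iic_eq_add_Icc h hs ht]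
      exact and_iff_right (hs ht)
  have hT : T ∩ Iic b =
      {t | t ∈ Icc a b ∧ ENNReal.ofReal u ≤ eVariationOn h (Icc a b ∩ Iic t)} := by
    ext t
    refine ⟨fun ⟨ht, htb⟩ => ?_, fun ⟨ht, hv⟩ => ⟨(hmem t ht).2 hv, ht.2⟩⟩
    have hab' : t ∈ Icc a b := ⟨hlow t ht, htb⟩
    exact ⟨hab', (hmem t hab').1 ht⟩
  have hbT : b ∈ T := (hmem b ⟨hab, le_rfl⟩).2 (by rwa [inter_eq_left.2 Icc_subset_Iic_self])
  simp only [arcParamOn]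
  rw [← hT, csInf_inter_Iic_of_mem ⟨a, hlow⟩ hbT]

theorem lineIntegral_Icc_le (ρ : X → ℝ≥0∞) (hs : Icc a b ⊆ s) (hab : a ≤ b) :
    lineIntegral ρ (Icc a b) h ≤ lineIntegral ρ s h := by
  by_cases hV : eVariationOn h s = ∞
  · simp [lineIntegral, hV]
  set c := eVariationOn h (s ∩ Iic a)
  set V' := eVariationOn h (Icc a b)
  have hcV : c + V' ≤ eVariationOn h s := by
    have hsplit := eVariationOn_inter_Iic_eq_add_Icc h hs ⟨hab, le_rfl⟩
    rw [inter_eq_left.2 Icc_subset_Iic_self] at hsplit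
    exact hsplit ▸ eVariationOn.mono h inter_subset_left
  have hc : c ≠ ∞ := ne_top_of_le_ne_top hV (le_self_add.trans hcV)
  have hV' : V' ≠ ∞ := ne_top_of_le_ne_top hV (le_add_self.trans hcV)
  rw [lineIntegral, lineIntegral, if_neg hV', if_neg hV]
  calc ∫⁻ u in Icc 0 V'.toReal, ρ (arcParamOn h (Icc a b) u)
      = ∫⁻ u in Ioc 0 V'.toReal, ρ (arcParamOn h s (u + c.toReal)) := by
        rw [setLIntegral_congr Ioc_ae_eq_Icc.symm]
        refine setLIntegral_congr_fun measurableSet_Ioc fun u hu => ?_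
        rw [arcParamOn_Icc_eq h hs hab hc hu.1 ((ENNReal.ofReal_le_iff_le_toReal hV').2 hu.2)]
    _ = ∫⁻ v in Ioc c.toReal (V'.toReal + c.toReal), ρ (arcParamOn h s v) := by
        rw [← (measurePreserving_add_right volume c.toReal).setLIntegral_comp_preimage_emb
          (measurableEmbedding_addRight _) (fun v => ρ (arcParamOn h s v)),
          preimage_add_const_Ioc, sub_self, add_sub_cancel_right]
    _ ≤ ∫⁻ v in Icc 0 (eVariationOn h s).toReal, ρ (arcParamOn h s v) := by
        refine lintegral_mono_set
          (Ioc_subset_Icc_self.trans (Icc_subset_Icc ENNReal.toReal_nonneg ?_))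
        rw [← ENNReal.toReal_add hV' hc, add_comm]
        exact ENNReal.toReal_mono hV hcV

end Arclength

theorem lineIntegralOP_Icc_le {n : ℕ} (ρ : Eucl n → ℝ≥0∞)
    (γ : ℝ → OnePoint (Eucl n)) {s : Set ℝ} {a b : ℝ} (hs : Icc a b ⊆ s) (hab : a ≤ b) :
    lineIntegralOP ρ (Icc a b) γ ≤ lineIntegralOP ρ s γ := by
  by_cases hγ : ∀ t ∈ s, γ t ≠ OnePoint.infty
  · rw [lineIntegralOP, lineIntegralOP, if_pos hγ, if_pos fun t ht => hγ t (hs ht)]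
    exact lineIntegral_Icc_le _ ρ hs hab
  · simp only [lineIntegralOP, if_neg hγ, le_top]

theorem modulus_le_of_forall_exists_lineIntegralOP_le {n : ℕ} (p : ℝ)
    {Γ Γ' : Set (Curve (OnePoint (Eucl n)))}
    (h : ∀ c ∈ Γ, ∃ c' ∈ Γ', ∀ ρ, lineIntegralOP ρ c'.1 c'.2 ≤ lineIntegralOP ρ c.1 c.2) :
    modulus p Γ ≤ modulus p Γ' :=
  le_iInf₂ fun ρ hρ => iInf₂_le ρ ⟨hρ.1, fun c hc =>
    let ⟨c', hc', hle⟩ := h c hc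
    (hρ.2 c' hc').trans (hle ρ)⟩

section Crossing

variable {α δ : Type*} [ConditionallyCompleteLinearOrder α] [TopologicalSpace α] [OrderTopology α]
  [DenselyOrdered α] [LinearOrder δ] [TopologicalSpace δ] [OrderClosedTopology δ]

theorem ContinuousOn.exists_eq_forall_lt_before {g : α → δ} {a b : α} {t : δ} (hab : a ≤ b)
    (hg : ContinuousOn g (Icc a b)) (ha : g a ≤ t) (hb : t ≤ g b) :
    ∃ c ∈ Icc a b, g c = t ∧ ∀ s ∈ Ico a c, g s < t := by
  set S := Icc a b ∩ g ⁻¹' Ici t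
  have hbdd : BddBelow S := ⟨a, fun _ hs => hs.1.1⟩
  have hcS : sInf S ∈ S := (hg.preimage_isClosed_of_isClosed isClosed_Icc isClosed_Ici).csInf_mem
    ⟨b, ⟨hab, le_rfl⟩, hb⟩ hbdd
  obtain ⟨w, hw, hgw⟩ :=
    intermediate_value_Icc hcS.1.1 (hg.mono (Icc_subset_Icc_right hcS.1.2)) ⟨ha, hcS.2⟩
  have hwc : w = sInf S :=
    le_antisymm hw.2 (csInf_le hbdd ⟨⟨hw.1, hw.2.trans hcS.1.2⟩, hgw.ge⟩)
  refine ⟨sInf S, hcS.1, hwc ▸ hgw, fun s hs => not_le.1 fun hts => hs.2.not_ge ?_⟩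
  exact csInf_le hbdd ⟨⟨hs.1, hs.2.le.trans hcS.1.2⟩, hts⟩

theorem ContinuousOn.exists_eq_forall_lt_after {g : α → δ} {a b : α} {t : δ} (hab : a ≤ b)
    (hg : ContinuousOn g (Icc a b)) (ha : g a ≤ t) (hb : t ≤ g b) :
    ∃ c ∈ Icc a b, g c = t ∧ ∀ s ∈ Ioc c b, t < g s := by
  set S := Icc a b ∩ g ⁻¹' Iic t
  have hbdd : BddAbove S := ⟨b, fun _ hs => hs.1.2⟩
  have hcS : sSup S ∈ S := (hg.preimage_isClosed_of_isClosed isClosed_Icc isClosed_Iic).csSup_mem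
    ⟨a, ⟨le_rfl, hab⟩, ha⟩ hbdd
  obtain ⟨w, hw, hgw⟩ :=
    intermediate_value_Icc hcS.1.2 (hg.mono (Icc_subset_Icc_left hcS.1.1)) ⟨hcS.2, hb⟩
  have hwc : w = sSup S :=
    le_antisymm (le_csSup hbdd ⟨⟨hcS.1.1.trans hw.1, hw.2⟩, hgw.le⟩) hw.1
  refine ⟨sSup S, hcS.1, hwc ▸ hgw, fun s hs => not_le.1 fun hst => hs.1.not_ge ?_⟩
  exact le_csSup hbdd ⟨⟨hcS.1.1.trans hs.1.le, hs.2⟩, hst⟩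

theorem ContinuousOn.exists_crossing {g : α → δ} {a b : α} {r₁ r₂ : δ} (hab : a ≤ b)
    (hg : ContinuousOn g (Icc a b)) (ha : g a ≤ r₁) (hr : r₁ < r₂) (hb : r₂ ≤ g b) :
    ∃ a' b', a ≤ a' ∧ a' < b' ∧ b' ≤ b ∧ g a' = r₁ ∧ g b' = r₂ ∧
      ∀ s ∈ Ioo a' b', r₁ < g s ∧ g s < r₂ := by
  obtain ⟨b', hb', hgb', hbefore⟩ := hg.exists_eq_forall_lt_before hab (ha.trans hr.le) hb
  obtain ⟨a', ha', hga', hafter⟩ :=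
    (hg.mono (Icc_subset_Icc_right hb'.2)).exists_eq_forall_lt_after hb'.1 ha (hgb' ▸ hr.le)
  have hab' : a' < b' := ha'.2.lt_of_ne fun h => hr.ne (by rw [← hga', ← hgb', h])
  exact ⟨a', b', ha'.1, hab', hb'.2, hga', hgb',
    fun s hs => ⟨hafter s ⟨hs.1, hs.2.le⟩, hbefore s ⟨ha'.1.trans hs.1.le, hs.2⟩⟩⟩

end Crossing

theorem exists_joinFam_subcurve_of_mem_gammaE {n : ℕ} {x : Eucl n} {ε t : ℝ} (hεt : ε < t)
    (ht : t < 2 * ε) {c : Curve (Eucl n)} (hc : c ∈ gammaE x ε) :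
    ∃ a b, a ≤ b ∧ Icc a b ⊆ c.1 ∧
      (Icc a b, c.2) ∈ joinFam (sphere x ε) (sphere x t) (ann x ε t) := by
  obtain ⟨S, γ⟩ := c
  obtain ⟨a, b, -, rfl, hcont, hstart, -, hleave⟩ := hc
  obtain ⟨_, ⟨s₀, hs₀, rfl⟩, hfar⟩ :=
    not_subset.1 (hleave _ (isCompact_closedBall x t) (closedBall_subset_ball ht))
  have hIcc : Icc a s₀ ⊆ Ico a b := Icc_subset_Ico_right hs₀.2
  have hg : ContinuousOn (fun s => dist (γ s) x) (Icc a s₀) :=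
    (continuous_id.dist continuous_const).comp_continuousOn (hcont.mono hIcc)
  obtain ⟨a', b', ha', hab', hb', hga', hgb', hbetween⟩ := hg.exists_crossing hs₀.1
    (mem_closedBall.1 hstart) hεt (not_le.1 (mt mem_closedBall.2 hfar)).le
  have hsub : Icc a' b' ⊆ Ico a b := (Icc_subset_Icc ha' hb').trans hIcc
  exact ⟨a', b', hab'.le, hsub, a', b', hab', rfl, hcont.mono hsub,
    mem_sphere.2 hga', mem_sphere.2 hgb', hbetween⟩

theorem modulus_imageFam_gammaE_le {n : ℕ} (p : ℝ) (f : Eucl n → OnePoint (Eucl n))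
    {x : Eucl n} {ε t : ℝ} (hεt : ε < t) (ht : t < 2 * ε) :
    modulus p (imageFam f (gammaE x ε)) ≤
      modulus p (imageFam f (joinFam (sphere x ε) (sphere x t) (ann x ε t))) := by
  refine modulus_le_of_forall_exists_lineIntegralOP_le p ?_
  rintro _ ⟨c, hc, rfl⟩
  obtain ⟨a, b, hab, hsub, hjoin⟩ := exists_joinFam_subcurve_of_mem_gammaE hεt ht hc
  exact ⟨_, ⟨_, hjoin, rfl⟩, fun ρ => lineIntegralOP_Icc_le ρ _ hsub hab⟩

theorem ofReal_le_infEDist_compl_of_ball_subset {α : Type*} [PseudoMetricSpace α] {x : α}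
    {r : ℝ} {D : Set α} (hD : ball x r ⊆ D) : ENNReal.ofReal r ≤ infEDist x Dᶜ :=
  le_infEDist.2 fun y hy => by
    rw [edist_dist]
    exact ENNReal.ofReal_le_ofReal (not_lt.1 fun h => hy (hD (mem_ball'.2 h)))

theorem IsRingMapping.modulus_joinFam_le {n : ℕ} {p : ℝ} {D : Set (Eucl n)}
    {Q : Eucl n → ℝ≥0∞} {f : Eucl n → OnePoint (Eucl n)} (hf : IsRingMapping p D Q f)
    {x₀ : Eucl n} (hx₀ : x₀ ∈ D) {r₁ r₂ : ℝ} (hr₁ : 0 < r₁) (hr : r₁ < r₂)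
    (hr₂ : ENNReal.ofReal r₂ < infEDist x₀ Dᶜ) :
    modulus p (imageFam f (joinFam (sphere x₀ r₁) (sphere x₀ r₂) (ann x₀ r₁ r₂))) ≤
      ENNReal.ofReal ((r₂ - r₁)⁻¹ ^ p) * ∫⁻ y in ann x₀ r₁ r₂, Q y := by
  have hpos : 0 < (r₂ - r₁)⁻¹ := inv_pos.2 (sub_pos.2 hr)
  have hη : 1 ≤ ∫⁻ _ in Ioo r₁ r₂, ENNReal.ofReal (r₂ - r₁)⁻¹ := by
    rw [setLIntegral_const, Real.volume_Ioo, ← ENNReal.ofReal_mul hpos.le,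
      inv_mul_cancel₀ (sub_pos.2 hr).ne', ENNReal.ofReal_one]
  calc _ ≤ ∫⁻ y in ann x₀ r₁ r₂, Q y * ENNReal.ofReal (r₂ - r₁)⁻¹ ^ p :=
        hf.2 x₀ hx₀ r₁ r₂ hr₁ hr hr₂ _ measurable_const hη
    _ = _ := by
        rw [ENNReal.ofReal_rpow_of_pos hpos, lintegral_mul_const' _ _ ENNReal.ofReal_ne_top,
          mul_comm]

theorem le_div_ofReal_rpow_of_forall_mem_Ioo {M I : ℝ≥0∞} {r₁ r₂ p : ℝ} (hr : r₁ < r₂)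
    (h : ∀ t ∈ Ioo r₁ r₂, M ≤ ENNReal.ofReal ((t - r₁)⁻¹ ^ p) * I) :
    M ≤ I / ENNReal.ofReal ((r₂ - r₁) ^ p) := by
  rcases eq_or_ne I ∞ with hI | hI
  · simp [hI, ENNReal.top_div_of_ne_top]
  have hr' : r₂ - r₁ ≠ 0 := (sub_pos.2 hr).ne'
  have hcont : ContinuousAt (fun t : ℝ => (t - r₁)⁻¹ ^ p) r₂ :=
    ((continuous_sub_right r₁).continuousAt.inv₀ hr').rpow_const (Or.inl (inv_ne_zero hr'))
  have hval : ENNReal.ofReal ((r₂ - r₁)⁻¹ ^ p) * I = I / ENNReal.ofReal ((r₂ - r₁) ^ p) := by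
    rw [Real.inv_rpow (sub_pos.2 hr).le, ENNReal.ofReal_inv_of_pos (by bound),
      ENNReal.div_eq_inv_mul]
  have hlim : Tendsto (fun t => ENNReal.ofReal ((t - r₁)⁻¹ ^ p) * I) (𝓝[<] r₂)
      (𝓝 (I / ENNReal.ofReal ((r₂ - r₁) ^ p))) :=
    hval ▸ (ENNReal.Tendsto.mul_const (ENNReal.continuous_ofReal.continuousAt.comp hcont).tendsto
      (Or.inr hI)).mono_left nhdsWithin_le_nhds
  exact ge_of_tendsto hlim (eventually_of_mem (Ioo_mem_nhdsLT hr) h)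

theorem modulus_gammaE_le_of_ringMapping_general (n : ℕ) (p : ℝ) (D : Set (Eucl n))
    (Q : Eucl n → ℝ≥0∞) (f : Eucl n → OnePoint (Eucl n)) (hring : IsRingMapping p D Q f)
    (x : Eucl n) (ε : ℝ) (hε : 0 < ε)
    (hball : Metric.ball x (2 * ε) ⊆ D) :
    modulus p (imageFam f (gammaE x ε)) ≤
      (∫⁻ y in Metric.ball x (2 * ε), Q y) / ENNReal.ofReal (ε ^ p) := by
  set I := ∫⁻ y in ball x (2 * ε), Q y
  have hbound : ∀ t ∈ Ioo ε (2 * ε),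
      modulus p (imageFam f (gammaE x ε)) ≤ ENNReal.ofReal ((t - ε)⁻¹ ^ p) * I := by
    rintro t ⟨hεt, ht⟩
    have ht_lt : ENNReal.ofReal t < infEDist x Dᶜ :=
      ((ENNReal.ofReal_lt_ofReal_iff (by linarith)).2 ht).trans_le
        (ofReal_le_infEDist_compl_of_ball_subset hball)
    calc _ ≤ _ := modulus_imageFam_gammaE_le p f hεt ht
      _ ≤ ENNReal.ofReal ((t - ε)⁻¹ ^ p) * ∫⁻ y in ann x ε t, Q y :=
        hring.modulus_joinFam_le (hball (mem_ball_self (by positivity))) hε hεt ht_lt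
      _ ≤ _ := by
        gcongr
        exact lintegral_mono_set fun y (hy : y ∈ ann x ε t) => mem_ball.2 (hy.2.trans ht)
  simpa only [two_mul, add_sub_cancel_right] using
    le_div_ofReal_rpow_of_forall_mem_Ioo (by linarith) hbound

/-- **Modulus estimate (3.6).** Let `D ⊆ ℝⁿ`, `n ≥ 2`, be a domain, `p > n-1`, and
`f : D → ℝ̄ⁿ` an open discrete ring `(p,Q)`-mapping with `Q ∈ L¹_loc(D)`, `∞ ∉ f(D)`.
Then for `x ∈ D` and `ε > 0` with `B(x,2ε) ⊆ D`,
`M_p(fΓ_E) ≤ ε⁻ᵖ ∫_{B(x,2ε)} Q dm`. -/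
theorem modulus_gammaE_le_of_ringMapping (n : ℕ) (hn : 2 ≤ n) (p : ℝ)
    (hp : (n : ℝ) - 1 < p) (D : Set (Eucl n)) (hD : IsOpen D) (hDconn : IsConnected D)
    (Q : Eucl n → ℝ≥0∞) (hQ : LocIntOn Q D)
    (f : Eucl n → OnePoint (Eucl n)) (hring : IsRingMapping p D Q f)
    (hdisc : DiscreteOn f D) (hopen : OpenOn f D)
    (hinf : ∀ x ∈ D, f x ≠ OnePoint.infty)
    (x : Eucl n) (hx : x ∈ D) (ε : ℝ) (hε : 0 < ε)
    (hball : Metric.ball x (2 * ε) ⊆ D) :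
    modulus p (imageFam f (gammaE x ε)) ≤
      (∫⁻ y in Metric.ball x (2 * ε), Q y) / ENNReal.ofReal (ε ^ p) :=
  modulus_gammaE_le_of_ringMapping_general n p D Q f hring x ε hε hball

end
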